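/- arXiv:0711.2799 — 3 statements merged into one kernel-verified Lean document; each statement's English description precedes it below -/
import Mathlib

section
/- Let L be an even positive integer, let A be the set of vectors in {0,1}^L having exactly L/2 coordinates equal to 1, and let g : A → A be an arbitrary function. Then there exist a dimension K, a positive integer m, a monotone map F : {0,1}^K → {0,1}^K, and pairwise distinct coordinates a_1,...,a_L, d_1, d_2 (the inputs) and c_1,...,c_L (the outputs) such that: (i) in the dependency digraph of F every vertex has indegree at most 2 and outdegree at most 2, every input coordinate has indegree 0, and every output coordinate has outdegree 0; (ii) for every trajectory x(0), x(1), x(2), ... with externally driven inputs (i.e. satisfying x(t+1)_j = F(x(t))_j for every non-input coordinate j and every t) and every time t at which (x(t)_{a_1},...,x(t)_{a_L}) ∈ A: if (x(t)_{d_1}, x(t)_{d_2}) = (0,1) then (x(t+m)_{c_1},...,x(t+m)_{c_L}) = (x(t)_{a_1},...,x(t)_{a_L}), and if (x(t)_{d_1}, x(t)_{d_2}) = (1,0) then (x(t+m)_{c_1},...,x(t+m)_{c_L}) = g(x(t)_{a_1},...,x(t)_{a_L}). -/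
/-- Arc `i → j` in the dependency digraph of a Boolean map
`F : {0,1}^K → {0,1}^K`. -/
def BNarc {K : ℕ} (F : (Fin K → Bool) → (Fin K → Bool)) (i j : Fin K) : Prop :=
  ∃ s r : Fin K → Bool, (∀ k, k ≠ i → s k = r k) ∧ s i < r i ∧ F s j < F r j

/-- Membership in the antichain `A`: exactly `L/2` coordinates equal `1`. -/
def inA {L : ℕ} (v : Fin L → Bool) : Prop :=
  (Finset.univ.filter fun i => v i = true).card = L / 2

/-!
A straight-line program whose instructions update one register by a monotone gate of fan-in at
most two can be unrolled in time into a layered network: layer `l + 1` copies layer `l`, except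
for the register written by instruction `l`. A node is then read only by its own copy and by that
one instruction, so in- and out-degrees are at most `2`; inputs sit in layer `0`, outputs in the
last layer, and a trajectory advances the program by one instruction per layer and time step.

The program computes `c_i = (d₂ ∧ a_i) ∨ (d₁ ∧ ⋁ {⋀_{v_j = 1} a_j | v ∈ A, g(v)_i = 1})`. As `A` is
an antichain, the only `v ∈ A` below an input `a ∈ A` is `a` itself, so for `d = (1,0)` the
disjunction is `g(a)_i`.
-/

open Function

section Arc

variable {α β : Type*}

def Arc (F : (α → Bool) → α → Bool) (i j : α) : Prop :=
  ∃ s r : α → Bool, (∀ k, k ≠ i → s k = r k) ∧ s i < r i ∧ F s j < F r j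

lemma Arc.mem {F : (α → Bool) → α → Bool} {i j : α} (h : Arc F i j) {T : Set α}
    (hT : ∀ s r, Set.EqOn s r T → F s j = F r j) : i ∈ T := by
  by_contra hi
  obtain ⟨s, r, hsr, -, hF⟩ := h
  exact hF.ne (hT s r fun k hk => hsr k (ne_of_mem_of_not_mem hk hi))

def relabel (e : α ≃ β) (F : (α → Bool) → α → Bool) : (β → Bool) → β → Bool :=
  fun x b => F (x ∘ e) (e.symm b)

lemma Monotone.relabel {F : (α → Bool) → α → Bool} (hF : Monotone F) (e : α ≃ β) :
    Monotone (relabel e F) :=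
  fun _ _ h b => hF (fun a => h (e a)) (e.symm b)

lemma arc_relabel_iff {F : (α → Bool) → α → Bool} (e : α ≃ β) {i j : β} :
    Arc (relabel e F) i j ↔ Arc F (e.symm i) (e.symm j) := by
  constructor
  · rintro ⟨s, r, hsr, hi, hF⟩
    refine ⟨s ∘ e, r ∘ e, fun k hk => hsr (e k) ?_, by simpa using hi, hF⟩
    rintro rfl
    simp at hk
  · rintro ⟨s, r, hsr, hi, hF⟩
    refine ⟨s ∘ e.symm, r ∘ e.symm, fun k hk => hsr (e.symm k) (e.symm.injective.ne hk), hi, ?_⟩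
    simpa [relabel, comp_assoc] using hF

lemma ncard_setOf_arc_relabel_in {F : (α → Bool) → α → Bool} (e : α ≃ β) (j : β) :
    {i | Arc (relabel e F) i j}.ncard = {i | Arc F i (e.symm j)}.ncard := by
  simp_rw [arc_relabel_iff]
  rw [← Set.ncard_image_of_injective _ e.injective, e.image_eq_preimage_symm]
  rfl

lemma ncard_setOf_arc_relabel_out {F : (α → Bool) → α → Bool} (e : α ≃ β) (i : β) :
    {j | Arc (relabel e F) i j}.ncard = {j | Arc F (e.symm i) j}.ncard := by
  simp_rw [arc_relabel_iff]
  rw [← Set.ncard_image_of_injective _ e.injective, e.image_eq_preimage_symm]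
  rfl

end Arc

lemma Set.ncard_le_two_of_subset_pair {α : Type*} {s : Set α} {a b : α} (h : s ⊆ {a, b}) :
    s.ncard ≤ 2 :=
  (Set.ncard_le_ncard h (Set.toFinite _)).trans <|
    (Set.ncard_insert_le a {b}).trans (by rw [Set.ncard_singleton])

lemma List.all_update_of_not_mem {α : Type*} [DecidableEq α] {l : List α} {w : α} (hw : w ∉ l)
    (s : α → Bool) (b : Bool) : l.all (update s w b) = l.all s := by
  induction l with
  | nil => rfl
  | cons r l ih =>
    simp only [List.mem_cons, not_or] at hw
    simp [ih hw.2, update_of_ne (Ne.symm hw.1)]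

lemma List.any_update_of_not_mem {α : Type*} [DecidableEq α] {l : List α} {w : α} (hw : w ∉ l)
    (s : α → Bool) (b : Bool) : l.any (update s w b) = l.any s := by
  induction l with
  | nil => rfl
  | cons r l ih =>
    simp only [List.mem_cons, not_or] at hw
    simp [ih hw.2, update_of_ne (Ne.symm hw.1)]

inductive Instr (R : Type*)
  | set (w : R) (b : Bool)
  | and (w r : R)
  | or (w r : R)

namespace Instr

variable {R : Type*}

def dest : Instr R → R
  | set w _ | and w _ | or w _ => w

def src : Instr R → R
  | set w _ => w
  | and _ r | or _ r => r

def value : Instr R → (R → Bool) → Bool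
  | set _ b, _ => b
  | and w r, s => s w && s r
  | or w r, s => s w || s r

lemma value_mono (I : Instr R) : Monotone I.value := by
  intro s s' h
  have hle := fun r => Bool.le_iff_imp.mp (h r)
  cases I <;> simp only [value, Bool.le_iff_imp, Bool.and_eq_true, Bool.or_eq_true, imp_self]
  all_goals grind

variable [DecidableEq R]

def exec (I : Instr R) (s : R → Bool) : R → Bool :=
  update s I.dest (I.value s)

def reads (I : Instr R) (u : R) : Set R :=
  if u = I.dest then {u, I.src} else {u}

lemma exec_mono (I : Instr R) : Monotone I.exec := by
  intro s s' h u
  by_cases hu : u = I.dest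
  · subst hu; simpa [exec] using I.value_mono h
  · simpa [exec, hu] using h u

lemma exec_congr (I : Instr R) {s s' : R → Bool} {u : R} (h : Set.EqOn s s' (I.reads u)) :
    I.exec s u = I.exec s' u := by
  by_cases hu : u = I.dest
  · have hd : s I.dest = s' I.dest := h (by simp [reads, hu])
    have hs : s I.src = s' I.src := h (by simp [reads, hu])
    subst hu
    cases I <;> simp_all [exec, value, dest, src]
  · simpa [exec, hu] using h (by simp [reads, hu])

lemma reads_subset (I : Instr R) (u : R) : I.reads u ⊆ {u, I.src} := by
  unfold reads; split_ifs <;> simp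

lemma eq_or_eq_dest_of_mem_reads {I : Instr R} {u u' : R} (h : u ∈ I.reads u') :
    u' = u ∨ u' = I.dest := by
  unfold reads at h; split_ifs at h with hu
  · exact .inr hu
  · exact .inl (Set.mem_singleton_iff.mp h).symm

end Instr

namespace StraightLine

variable {R : Type*} [DecidableEq R]

def run (p : List (Instr R)) (s : R → Bool) : R → Bool :=
  p.foldl (fun s I => I.exec s) s

@[simp] lemma run_nil (s : R → Bool) : run [] s = s := rfl

@[simp] lemma run_cons (I : Instr R) (p : List (Instr R)) (s : R → Bool) :
    run (I :: p) s = run p (I.exec s) := rfl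

lemma run_append (p q : List (Instr R)) (s : R → Bool) : run (p ++ q) s = run q (run p s) :=
  List.foldl_append

lemma run_take_add_one (p : List (Instr R)) {l : ℕ} (hl : l < p.length) (s : R → Bool) :
    run (p.take (l + 1)) s = p[l].exec (run (p.take l) s) := by
  rw [List.take_add_one, List.getElem?_eq_getElem hl, run_append]
  rfl

def network (p : List (Instr R)) (x : Fin (p.length + 1) × R → Bool) :
    Fin (p.length + 1) × R → Bool
  | (⟨0, _⟩, _) => false
  | (⟨l + 1, _⟩, u) => p[l].exec (fun r => x (⟨l, by omega⟩, r)) u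

variable (p : List (Instr R))

lemma network_succ (x : Fin (p.length + 1) × R → Bool) (l : Fin p.length) (u : R) :
    network p x (l.succ, u) = p[l].exec (fun r => x (l.castSucc, r)) u := rfl

lemma network_mono : Monotone (network p) := by
  rintro x y h ⟨⟨_ | l, hl⟩, u⟩
  · exact le_rfl
  · exact p[l].exec_mono (fun r => h _) u

lemma not_arc_network_zero (i : Fin (p.length + 1) × R) (u : R) :
    ¬ Arc (network p) i (0, u) :=
  fun h => h.mem (T := ∅) fun _ _ _ => rfl

lemma arc_network_succ {i : Fin (p.length + 1) × R} {l : Fin p.length} {u : R}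
    (h : Arc (network p) i (l.succ, u)) : i.1 = l.castSucc ∧ i.2 ∈ p[l].reads u :=
  h.mem (T := {n | n.1 = l.castSucc ∧ n.2 ∈ p[l].reads u}) fun _ _ hsr =>
    p[l].exec_congr fun _ hr => hsr ⟨rfl, hr⟩

lemma exists_arc_network {i j : Fin (p.length + 1) × R} (h : Arc (network p) i j) :
    ∃ l : Fin p.length, j.1 = l.succ ∧ i.1 = l.castSucc ∧ i.2 ∈ p[l].reads j.2 := by
  obtain ⟨l', u⟩ := j
  cases l' using Fin.cases with
  | zero => exact absurd h (not_arc_network_zero p i u)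
  | succ l => exact ⟨l, rfl, arc_network_succ p h⟩

lemma not_arc_network_last (u : R) (j : Fin (p.length + 1) × R) :
    ¬ Arc (network p) (Fin.last _, u) j := by
  intro h
  obtain ⟨l, -, hl, -⟩ := exists_arc_network p h
  exact (Fin.castSucc_lt_last l).ne' hl

lemma ncard_setOf_arc_network_in (j : Fin (p.length + 1) × R) :
    {i | Arc (network p) i j}.ncard ≤ 2 := by
  obtain ⟨l', u⟩ := j
  cases l' using Fin.cases with
  | zero => simp [not_arc_network_zero]
  | succ l =>
    refine Set.ncard_le_two_of_subset_pair (a := (l.castSucc, u)) (b := (l.castSucc, p[l].src)) ?_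
    intro i hi
    obtain ⟨hl, hu⟩ := arc_network_succ p hi
    rcases p[l].reads_subset u hu with hu | hu
    · exact .inl (Prod.ext hl hu)
    · exact .inr (Prod.ext hl hu)

lemma ncard_setOf_arc_network_out (i : Fin (p.length + 1) × R) :
    {j | Arc (network p) i j}.ncard ≤ 2 := by
  obtain ⟨l', u⟩ := i
  cases l' using Fin.lastCases with
  | last => simp [not_arc_network_last]
  | cast l =>
    refine Set.ncard_le_two_of_subset_pair (a := (l.succ, u)) (b := (l.succ, p[l].dest)) ?_
    intro j hj
    obtain ⟨l'', hj1, hl, hu⟩ := exists_arc_network p hj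
    obtain rfl := Fin.castSucc_injective _ hl
    rcases Instr.eq_or_eq_dest_of_mem_reads hu with hu | hu
    · exact .inl (Prod.ext hj1 hu)
    · exact .inr (Prod.ext hj1 hu)

lemma network_trajectory (y : ℕ → Fin (p.length + 1) × R → Bool)
    (hy : ∀ t (l : Fin p.length) u, y (t + 1) (l.succ, u) = network p (y t) (l.succ, u))
    (t : ℕ) : ∀ (l : ℕ) (hl : l < p.length + 1) (u : R),
      y (t + l) (⟨l, hl⟩, u) = run (p.take l) (fun r => y t (0, r)) u
  | 0, _, _ => rfl
  | l + 1, hl, u => by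
    have hsucc : (⟨l + 1, hl⟩ : Fin (p.length + 1)) = Fin.succ ⟨l, by omega⟩ := rfl
    rw [run_take_add_one p (by omega), ← Nat.add_assoc, hsucc, hy, network_succ]
    refine congrArg (p[l].exec · u) ?_
    funext r
    exact network_trajectory y hy t l (by omega) r

theorem exists_network_realizing [Fintype R] :
    ∃ (K : ℕ) (F : (Fin K → Bool) → Fin K → Bool) (e : Fin (p.length + 1) × R ≃ Fin K),
      Monotone F ∧
      (∀ j, {i | BNarc F i j}.ncard ≤ 2) ∧ (∀ i, {j | BNarc F i j}.ncard ≤ 2) ∧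
      (∀ u k, ¬ BNarc F k (e (0, u))) ∧ (∀ u k, ¬ BNarc F (e (Fin.last _, u)) k) ∧
      ∀ x : ℕ → Fin K → Bool,
        (∀ t (l : Fin p.length) u, x (t + 1) (e (l.succ, u)) = F (x t) (e (l.succ, u))) →
        ∀ t u, x (t + p.length) (e (Fin.last _, u)) = run p (fun r => x t (e (0, r))) u := by
  let e := Fintype.equivFin (Fin (p.length + 1) × R)
  refine ⟨_, relabel e (network p), e, (network_mono p).relabel e, fun j => ?_, fun i => ?_,
    fun u k h => ?_, fun u k h => ?_, fun x hx t u => ?_⟩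
  · exact (ncard_setOf_arc_relabel_in e j).trans_le (ncard_setOf_arc_network_in p _)
  · exact (ncard_setOf_arc_relabel_out e i).trans_le (ncard_setOf_arc_network_out p _)
  · exact not_arc_network_zero p _ u (by simpa using (arc_relabel_iff e).mp h)
  · exact not_arc_network_last p u _ (by simpa using (arc_relabel_iff e).mp h)
  · have := network_trajectory p (fun t n => x t (e n))
      (fun t l u => (hx t l u).trans (by simp [relabel, comp_def])) t p.length (by omega) u
    rwa [List.take_length] at this

-- The leading `set` makes the result independent of the register's previous value, which in the
-- network is an arbitrary layer-`0` value.
def andBlock (w : R) (rs : List R) : List (Instr R) :=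
  .set w true :: rs.map (.and w)

def orBlock (w : R) (rs : List R) : List (Instr R) :=
  .set w false :: rs.map (.or w)

lemma run_map_and {w : R} {rs : List R} (hw : w ∉ rs) (s : R → Bool) :
    run (rs.map (.and w)) s = update s w (s w && rs.all s) := by
  induction rs generalizing s with
  | nil => simp
  | cons r rs ih =>
    simp only [List.mem_cons, not_or] at hw
    simp [ih hw.2, Instr.exec, Instr.dest, Instr.value, Bool.and_assoc,
      List.all_update_of_not_mem hw.2]

lemma run_map_or {w : R} {rs : List R} (hw : w ∉ rs) (s : R → Bool) :
    run (rs.map (.or w)) s = update s w (s w || rs.any s) := by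
  induction rs generalizing s with
  | nil => simp
  | cons r rs ih =>
    simp only [List.mem_cons, not_or] at hw
    simp [ih hw.2, Instr.exec, Instr.dest, Instr.value, Bool.or_assoc,
      List.any_update_of_not_mem hw.2]

lemma run_andBlock {w : R} {rs : List R} (hw : w ∉ rs) (s : R → Bool) :
    run (andBlock w rs) s = update s w (rs.all s) := by
  simp [andBlock, run_map_and hw, Instr.exec, Instr.dest, Instr.value,
    List.all_update_of_not_mem hw]

lemma run_orBlock {w : R} {rs : List R} (hw : w ∉ rs) (s : R → Bool) :
    run (orBlock w rs) s = update s w (rs.any s) := by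
  simp [orBlock, run_map_or hw, Instr.exec, Instr.dest, Instr.value,
    List.any_update_of_not_mem hw]

lemma run_flatMap_of_run_eq_update (ws : List R) (B : R → List (Instr R))
    (f : R → (R → Bool) → Bool) (hB : ∀ w ∈ ws, ∀ s, run (B w) s = update s w (f w s))
    (hf : ∀ w ∈ ws, ∀ w' ∈ ws, ∀ s b, f w (update s w' b) = f w s) (s : R → Bool) :
    run (ws.flatMap B) s = fun u => if u ∈ ws then f u s else s u := by
  induction ws generalizing s with
  | nil => rfl
  | cons w ws ih =>
    rw [List.flatMap_cons, run_append, hB w (by simp),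
      ih (fun w' hw' => hB w' (by simp [hw'])) (fun w' hw' w'' hw'' => hf w' (by simp [hw'])
        w'' (by simp [hw'']))]
    funext u
    by_cases hu : u ∈ ws
    · simp [hu, hf u (by simp [hu]) w (by simp)]
    · by_cases huw : u = w
      · subst huw; simp [hu]
      · simp [hu, huw]

lemma run_flatMap_andBlock (ws : List R) (rs : R → List R)
    (h : ∀ w ∈ ws, ∀ w' ∈ ws, w' ∉ rs w) (s : R → Bool) :
    run (ws.flatMap fun w => andBlock w (rs w)) s = fun u => if u ∈ ws then (rs u).all s else s u :=
  run_flatMap_of_run_eq_update ws _ _ (fun w hw => run_andBlock (h w hw w hw))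
    (fun w hw w' hw' => List.all_update_of_not_mem (h w hw w' hw')) s

lemma run_flatMap_orBlock (ws : List R) (rs : R → List R)
    (h : ∀ w ∈ ws, ∀ w' ∈ ws, w' ∉ rs w) (s : R → Bool) :
    run (ws.flatMap fun w => orBlock w (rs w)) s = fun u => if u ∈ ws then (rs u).any s else s u :=
  run_flatMap_of_run_eq_update ws _ _ (fun w hw => run_orBlock (h w hw w hw))
    (fun w hw w' hw' => List.any_update_of_not_mem (h w hw w' hw')) s

end StraightLine

inductive Reg (L : ℕ)
  | a (j : Fin L)
  | d (k : Fin 2)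
  | conj (v : Fin L → Bool)
  | pass (i : Fin L)
  | out (i : Fin L)
  deriving DecidableEq, Fintype

namespace Reg

open StraightLine Classical

variable {L : ℕ}

noncomputable def sources (g : (Fin L → Bool) → Fin L → Bool) : Reg L → List (Reg L)
  | conj v => d 0 :: ((List.finRange L).filter v).map a
  | pass i => [d 1, a i]
  | out i => pass i :: (Finset.univ.filter fun v => inA v ∧ g v i = true).toList.map conj
  | _ => []

noncomputable def program (g : (Fin L → Bool) → Fin L → Bool) : List (Instr (Reg L)) :=
  (Finset.univ.toList.map conj).flatMap (fun w => andBlock w (sources g w)) ++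
  ((List.finRange L).map pass).flatMap (fun w => andBlock w (sources g w)) ++
  ((List.finRange L).map out).flatMap (fun w => orBlock w (sources g w))

lemma program_length_pos (g : (Fin L → Bool) → Fin L → Bool) : 0 < (program g).length :=
  List.length_pos_of_mem (a := .set (conj default) true) <| by
    simp [program, andBlock]

lemma run_program_out (g : (Fin L → Bool) → Fin L → Bool) (s : Reg L → Bool) (i : Fin L) :
    run (program g) s (out i) = ((s (d 1) && s (a i)) ||
      (s (d 0) && decide (∃ v, inA v ∧ g v i = true ∧ v ≤ fun j => s (a j)))) := by
  simp only [program, run_append]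
  rw [run_flatMap_orBlock _ _ (by simp [sources]), run_flatMap_andBlock _ _ (by simp [sources]),
    run_flatMap_andBlock _ _ (by simp [sources])]
  simp [sources, comp_def, Pi.le_def, Bool.le_iff_imp]
  congr 1
  cases s (d 0)
  · simp
  · rw [Bool.eq_iff_iff]
    simp [List.any_eq_true, List.all_eq_true, or_iff_not_imp_left, and_assoc]

end Reg

lemma eq_of_inA_of_le {L : ℕ} {v w : Fin L → Bool} (hv : inA v) (hw : inA w) (h : v ≤ w) :
    v = w := by
  have hsub : (Finset.univ.filter fun i => v i = true) ⊆ Finset.univ.filter fun i => w i = true :=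
    fun i => by simpa using Bool.le_iff_imp.mp (h i)
  have heq := Finset.eq_of_subset_of_card_le hsub (by rw [hv, hw])
  funext i
  simpa using congrArg (i ∈ ·) heq

lemma exists_inA_le_iff {L : ℕ} {w : Fin L → Bool} (hw : inA w) (P : (Fin L → Bool) → Prop) :
    (∃ v, inA v ∧ P v ∧ v ≤ w) ↔ P w :=
  ⟨fun ⟨_, hv, hP, hle⟩ => eq_of_inA_of_le hv hw hle ▸ hP, fun hP => ⟨w, hw, hP, le_rfl⟩⟩

theorem stmt5_general (L : ℕ)
    (g : (Fin L → Bool) → (Fin L → Bool)) :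
    ∃ (K m : ℕ) (F : (Fin K → Bool) → (Fin K → Bool))
      (a : Fin L → Fin K) (d : Fin 2 → Fin K) (c : Fin L → Fin K),
      0 < m ∧ Monotone F ∧
      Function.Injective a ∧ Function.Injective d ∧ Function.Injective c ∧
      (∀ i j, a i ≠ d j) ∧ (∀ i j, a i ≠ c j) ∧ (∀ i j, d i ≠ c j) ∧
      (∀ j : Fin K, {i : Fin K | BNarc F i j}.ncard ≤ 2) ∧
      (∀ i : Fin K, {j : Fin K | BNarc F i j}.ncard ≤ 2) ∧
      (∀ i, ∀ k, ¬ BNarc F k (a i)) ∧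
      (∀ i, ∀ k, ¬ BNarc F k (d i)) ∧
      (∀ i, ∀ k, ¬ BNarc F (c i) k) ∧
      (∀ x : ℕ → Fin K → Bool,
        (∀ (t : ℕ) (j : Fin K), (∀ i, j ≠ a i) → (∀ i, j ≠ d i) →
          x (t + 1) j = F (x t) j) →
        ∀ t : ℕ, inA (fun i => x t (a i)) →
          ((x t (d 0) = false ∧ x t (d 1) = true) →
            ∀ i, x (t + m) (c i) = x t (a i)) ∧
          ((x t (d 0) = true ∧ x t (d 1) = false) →
            ∀ i, x (t + m) (c i) = g (fun i => x t (a i)) i)) := by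
  obtain ⟨K, F, e, hF, hin, hout, hinputs, houtputs, htraj⟩ :=
    StraightLine.exists_network_realizing (Reg.program g)
  refine ⟨K, _, F, fun i => e (0, .a i), fun k => e (0, .d k), fun i => e (Fin.last _, .out i),
    Reg.program_length_pos g, hF, fun i j h => by simpa using h, fun i j h => by simpa using h,
    fun i j h => by simpa using h, by simp, by simp, by simp, hin, hout, fun i => hinputs _,
    fun i => hinputs _, fun i => houtputs _, fun x hx t hA => ?_⟩
  have hrun i := (htraj x (fun t l u => hx t _ (by simp) (by simp)) t (.out i)).trans
    (Reg.run_program_out g _ i)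
  refine ⟨fun ⟨h0, h1⟩ i => by simp [hrun, h0, h1], fun ⟨h0, h1⟩ i => ?_⟩
  simp only [hrun, h0, h1, Bool.false_and, Bool.true_and, Bool.false_or]
  simp [exists_inA_le_iff hA fun v => g v i = true]

/-- Lemma 3 (module `B`): for any even `L > 0` and any function `g : A → A`
there is a monotone Boolean network with inputs `a_1, …, a_L, d_1, d_2`,
outputs `c_1, …, c_L`, in- and outdegrees at most `2` (inputs of indegree `0`,
outputs of outdegree `0`), which after a fixed delay `m` outputs `a(t)` when
`d(t) = (0,1)` and `g(a(t))` when `d(t) = (1,0)`, for any trajectory with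
externally driven inputs and any `t` with `a(t) ∈ A`. -/
theorem stmt5 (L : ℕ) (hL : 0 < L) (hLeven : Even L)
    (g : (Fin L → Bool) → (Fin L → Bool)) (hg : ∀ v, inA v → inA (g v)) :
    ∃ (K m : ℕ) (F : (Fin K → Bool) → (Fin K → Bool))
      (a : Fin L → Fin K) (d : Fin 2 → Fin K) (c : Fin L → Fin K),
      0 < m ∧ Monotone F ∧
      Function.Injective a ∧ Function.Injective d ∧ Function.Injective c ∧
      (∀ i j, a i ≠ d j) ∧ (∀ i j, a i ≠ c j) ∧ (∀ i j, d i ≠ c j) ∧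
      (∀ j : Fin K, {i : Fin K | BNarc F i j}.ncard ≤ 2) ∧
      (∀ i : Fin K, {j : Fin K | BNarc F i j}.ncard ≤ 2) ∧
      (∀ i, ∀ k, ¬ BNarc F k (a i)) ∧
      (∀ i, ∀ k, ¬ BNarc F k (d i)) ∧
      (∀ i, ∀ k, ¬ BNarc F (c i) k) ∧
      (∀ x : ℕ → Fin K → Bool,
        (∀ (t : ℕ) (j : Fin K), (∀ i, j ≠ a i) → (∀ i, j ≠ d i) →
          x (t + 1) j = F (x t) j) →
        ∀ t : ℕ, inA (fun i => x t (a i)) →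
          ((x t (d 0) = false ∧ x t (d 1) = true) →
            ∀ i, x (t + m) (c i) = x t (a i)) ∧
          ((x t (d 0) = true ∧ x t (d 1) = false) →
            ∀ i, x (t + m) (c i) = g (fun i => x t (a i)) i)) :=
  stmt5_general L g
end

section
/- Let L be an even positive integer, let A be the set of vectors in {0,1}^L having exactly L/2 coordinates equal to 1, let START ∈ {0,1}^L be the vector consisting of L/2 ones followed by L/2 zeros, and let ACTIVE ∈ {0,1}^L be the vector consisting of L/2 zeros followed by L/2 ones. Then there exist a dimension K, a positive integer μ, a monotone map F : {0,1}^K → {0,1}^K, pairwise distinct input coordinates p_1,...,p_L and output coordinates q_1, q_2 such that: (i) in the dependency digraph of F every vertex has indegree at most 2 and outdegree at most 2, every input coordinate has indegree 0, and every output coordinate has outdegree 0; (ii) for every M > 1 and every trajectory x(0),...,x(μ+M) with externally driven inputs whose input values p(s) = (x(s)_{p_1},...,x(s)_{p_L}) satisfy p(s) ∈ A for 0 ≤ s ≤ M, p(0) = START, and p(s) ≠ START for 0 < s ≤ M, if j is the largest index with 0 ≤ j ≤ M such that p(s) = ACTIVE for all 1 ≤ s ≤ j, then the output q(s) = (x(s)_{q_1},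 x(s)_{q_2}) satisfies q(s) = (1,0) for μ ≤ s ≤ μ + j and q(s) = (0,1) for μ + j < s ≤ μ + M, regardless of the initial values of the non-input coordinates. -/
/-- `START`: `L/2` ones followed by `L/2` zeros. -/
def START (L : ℕ) : Fin L → Bool := fun i => decide ((i : ℕ) < L / 2)

/-- `ACTIVE`: `L/2` zeros followed by `L/2` ones. -/
def ACTIVE (L : ℕ) : Fin L → Bool := fun i => decide (L / 2 ≤ (i : ℕ))

def andOr (isAnd a b : Bool) : Bool := if isAnd then a && b else a || b

lemma andOr_mono (isAnd : Bool) {a a' b b' : Bool} (ha : a ≤ a') (hb : b ≤ b') :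
    andOr isAnd a b ≤ andOr isAnd a' b' := by
  revert ha hb; cases isAnd <;> cases a <;> cases a' <;> cases b <;> cases b' <;> decide

@[simp] lemma andOr_true (a b : Bool) : andOr true a b = (a && b) := rfl

@[simp] lemma andOr_false (a b : Bool) : andOr false a b = (a || b) := rfl

lemma andOr_xor (isAnd a b pol : Bool) :
    (andOr isAnd a b ^^ pol) = andOr (isAnd ^^ pol) (a ^^ pol) (b ^^ pol) := by
  cases isAnd <;> cases pol <;> simp [andOr]

def bigAndOr {α : Type*} (isAnd : Bool) (s : Finset α) (f : α → Bool) : Bool :=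
  if isAnd then decide (∀ a ∈ s, f a = true) else decide (∃ a ∈ s, f a = true)

section BigAndOr

variable {α : Type*} (isAnd : Bool) (f : α → Bool)

@[simp] lemma bigAndOr_empty : bigAndOr isAnd ∅ f = isAnd := by
  cases isAnd <;> simp [bigAndOr]

@[simp] lemma bigAndOr_singleton (a : α) : bigAndOr isAnd {a} f = f a := by
  cases isAnd <;> simp [bigAndOr]

lemma bigAndOr_union [DecidableEq α] (s t : Finset α) :
    bigAndOr isAnd (s ∪ t) f = andOr isAnd (bigAndOr isAnd s f) (bigAndOr isAnd t f) := by
  cases isAnd <;> simp [bigAndOr, andOr, or_imp, forall_and, or_and_right, exists_or]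

lemma bigAndOr_xor_self (s : Finset α) :
    (bigAndOr (!isAnd) s f ^^ isAnd) = decide (∀ a ∈ s, f a = !isAnd) := by
  cases isAnd
  · simp [bigAndOr]
  · simp only [bigAndOr, Bool.not_true, Bool.xor_true, Bool.false_eq_true, if_false,
      ← decide_not]
    simp

end BigAndOr

inductive Gate (α : Type*) where
  | const (b : Bool)
  | copy (a : α)
  | op (isAnd : Bool) (a b : α)

namespace Gate

variable {α : Type*}

def eval : Gate α → (α → Bool) → Bool
  | const b, _ => b
  | copy a, f => f a
  | op isAnd a b, f => andOr isAnd (f a) (f b)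

def reads [DecidableEq α] : Gate α → Finset α
  | const _ => ∅
  | copy a => {a}
  | op _ a b => {a, b}

def opOption (isAnd : Bool) : Option α → Option α → Gate α
  | some a, some b => op isAnd a b
  | some a, none => copy a
  | none, some b => copy b
  | none, none => const isAnd

lemma eval_mono (g : Gate α) {f f' : α → Bool} (h : f ≤ f') : g.eval f ≤ g.eval f' := by
  cases g with
  | const b => exact le_rfl
  | copy a => exact h a
  | op isAnd a b => exact andOr_mono isAnd (h a) (h b)

lemma eval_opOption (isAnd : Bool) (a b : Option α) (f : α → Bool) :
    (opOption isAnd a b).eval f = andOr isAnd ((a.map f).getD isAnd) ((b.map f).getD isAnd) := by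
  cases isAnd <;> cases a <;> cases b <;> simp [opOption, eval, andOr]

variable [DecidableEq α]

lemma eval_congr (g : Gate α) {f f' : α → Bool} (h : ∀ a ∈ g.reads, f a = f' a) :
    g.eval f = g.eval f' := by
  cases g <;> simp_all [eval, reads]

lemma card_reads_le (g : Gate α) : g.reads.card ≤ 2 := by
  cases g
  · simp [reads]
  · simp [reads]
  · exact Finset.card_le_two

lemma mem_reads_opOption {isAnd : Bool} {a b : Option α} {c : α}
    (h : c ∈ (opOption isAnd a b).reads) : a = some c ∨ b = some c := by
  cases a <;> cases b <;> simp_all [opOption, reads, eq_comm]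

end Gate

section Network

variable {V : Type*} {K : ℕ} (gate : V → Gate V) (e : V ≃ Fin K)

def circuitMap (x : Fin K → Bool) (k : Fin K) : Bool :=
  (gate (e.symm k)).eval (fun v => x (e v))

lemma circuitMap_monotone : Monotone (circuitMap gate e) :=
  fun _ _ hxy k => (gate (e.symm k)).eval_mono fun v => hxy (e v)

lemma circuitMap_apply (x : Fin K → Bool) (v : V) :
    circuitMap gate e x (e v) = (gate v).eval (fun w => x (e w)) := by
  simp [circuitMap]

variable {gate e} [DecidableEq V]

lemma mem_reads_of_BNarc {i j : Fin K} (h : BNarc (circuitMap gate e) i j) :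
    e.symm i ∈ (gate (e.symm j)).reads := by
  obtain ⟨s, r, hsr, -, hlt⟩ := h
  by_contra hi
  refine hlt.ne (Gate.eval_congr _ fun a ha => hsr _ fun hai => hi ?_)
  rwa [← hai, Equiv.symm_apply_apply]

omit [DecidableEq V] in
lemma ncard_le_card_of_symm_mem (S : Set (Fin K)) (T : Finset V) (h : ∀ i ∈ S, e.symm i ∈ T) :
    S.ncard ≤ T.card := by
  calc S.ncard ≤ ((T.map e.toEmbedding : Finset (Fin K)) : Set (Fin K)).ncard :=
        Set.ncard_le_ncard (fun i hi => by simpa using h i hi) (Finset.finite_toSet _)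
    _ = T.card := by
      rw [Finset.coe_map]
      exact (Set.ncard_image_of_injective _ e.injective).trans (Set.ncard_coe_finset T)

lemma ncard_BNarc_in_le (j : Fin K) : {i | BNarc (circuitMap gate e) i j}.ncard ≤ 2 :=
  (ncard_le_card_of_symm_mem _ _ fun _ => mem_reads_of_BNarc).trans (Gate.card_reads_le _)

lemma ncard_BNarc_out_le (consumers : V → Finset V)
    (hcons : ∀ a v, a ∈ (gate v).reads → v ∈ consumers a) (i : Fin K) :
    {j | BNarc (circuitMap gate e) i j}.ncard ≤ (consumers (e.symm i)).card :=
  ncard_le_card_of_symm_mem _ _ fun _ hj => hcons _ _ (mem_reads_of_BNarc hj)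

end Network

lemma eq_of_le_of_card_filter_le {ι : Type*} [Fintype ι] {u v : ι → Bool} (huv : u ≤ v)
    (hcard : (Finset.univ.filter fun i => v i = true).card ≤
      (Finset.univ.filter fun i => u i = true).card) : u = v := by
  have hsub : (Finset.univ.filter fun i => u i = true) ⊆ Finset.univ.filter fun i => v i = true :=
    fun i => by simpa using Bool.le_iff_imp.mp (huv i)
  have hfil := Finset.eq_of_subset_of_card_le hsub hcard
  funext i
  rw [Bool.eq_iff_iff]
  simpa using Finset.ext_iff.mp hfil i

lemma inA.eq_of_le {L : ℕ} {u v : Fin L → Bool} (hu : inA u) (hv : inA v) (huv : u ≤ v) :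
    u = v :=
  eq_of_le_of_card_filter_le huv (hv.trans hu.symm).le

/-- The loop `w k ↦ w (k + 2)` has length two: both of its parities are set by the single pulse
`s 1`, and both are reset by the single failure `h (j + 2)`. -/
lemma latch_spec {w s h : ℕ → Bool} {M j : ℕ} (hjM : j ≤ M)
    (hrec : ∀ k, w (k + 2) = ((w k || s (k + 1) || s k) && h (k + 2) && h (k + 1)))
    (hs1 : s 1 = true) (hs : ∀ k, 2 ≤ k → k ≤ M + 1 → s k = false)
    (hh : ∀ k, 1 ≤ k → k ≤ j + 1 → h k = true) (hhj : j < M → h (j + 2) = false) :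
    ∀ k, 1 ≤ k → k ≤ M + 1 → (w k || s k) = decide (k ≤ j + 1) := by
  have hset : ∀ k, 2 ≤ k → k ≤ j + 1 → w k = true := by
    intro k
    induction k using Nat.strong_induction_on with
    | _ k ih =>
      intro hk2 hkj
      obtain ⟨k, rfl⟩ : ∃ k', k = k' + 2 := ⟨k - 2, by omega⟩
      have hpulse : (w k || s (k + 1) || s k) = true := by
        rcases Nat.lt_or_ge k 2 with hk | hk
        · interval_cases k <;> simp [hs1]
        · simp [ih k (by omega) hk (by omega)]
      rw [hrec, hpulse, hh _ (by omega) hkj, hh _ (by omega) (by omega)]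
      rfl
  have hreset : ∀ k, j + 2 ≤ k → k ≤ M + 1 → w k = false := by
    intro k
    induction k using Nat.strong_induction_on with
    | _ k ih =>
      intro hkj hkM
      obtain ⟨k, rfl⟩ : ∃ k', k = k' + 2 := ⟨k - 2, by omega⟩
      rw [hrec]
      rcases Nat.lt_or_ge k (j + 2) with hk | hk
      · rcases (show k = j ∨ k = j + 1 by omega) with rfl | rfl <;> simp [hhj (by omega)]
      · simp [ih k (by omega) hk (by omega), hs (k + 1) (by omega) (by omega),
          hs k (by omega) (by omega)]
  intro k hk1 hkM
  rcases (show k = 1 ∨ 2 ≤ k by omega) with rfl | hk2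
  · simp [hs1]
  · rw [hs k hk2 hkM, Bool.or_false]
    rcases Nat.lt_or_ge (j + 1) k with hkj | hkj
    · simp [hreset k hkj hkM, show ¬ k ≤ j + 1 by omega]
    · simp [hset k hk2 hkj, hkj]

namespace SwitchNetwork

variable {n : ℕ}

variable (n) in
/-- Splits the `n + n` inputs into the halves `false` (the first `n`) and `true` (the last `n`). -/
def half : Fin (n + n) ≃ Bool × Fin n :=
  finSumFinEquiv.symm.trans (Equiv.boolProdEquivSum (Fin n)).symm

lemma val_half_symm (h : Bool) (m : Fin n) :
    ((half n).symm (h, m) : ℕ) = if h then n + m else m := by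
  cases h <;> rfl

lemma START_half_symm (h : Bool) (m : Fin n) : START (n + n) ((half n).symm (h, m)) = !h := by
  cases h <;> simp only [START, val_half_symm, Bool.false_eq_true, ↓reduceIte, Bool.not_false,
    Bool.not_true, decide_eq_true_eq, decide_eq_false_iff_not, not_lt] <;> omega

lemma ACTIVE_half_symm (h : Bool) (m : Fin n) : ACTIVE (n + n) ((half n).symm (h, m)) = h := by
  cases h <;> simp only [ACTIVE, val_half_symm, Bool.false_eq_true, ↓reduceIte,
    decide_eq_true_eq, decide_eq_false_iff_not, not_le] <;> omega

lemma inA_START : inA (START (n + n)) := by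
  simp only [inA, START, decide_eq_true_eq, Fin.card_filter_val_lt, inf_eq_right]
  omega

lemma inA_ACTIVE : inA (ACTIVE (n + n)) := by
  have hsplit := Finset.card_filter_add_card_filter_not
    (s := (Finset.univ : Finset (Fin (n + n)))) fun i => (i : ℕ) < n
  simp only [not_lt, Finset.card_univ, Fintype.card_fin, Fin.card_filter_val_lt] at hsplit
  simp only [inA, ACTIVE, decide_eq_true_eq, show (n + n) / 2 = n by omega]
  omega

lemma forall_half_eq_iff {v : Fin (n + n) → Bool} (hv : inA v) (h c : Bool) :
    (∀ m, v ((half n).symm (h, m)) = c) ↔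
      v = if h = c then ACTIVE (n + n) else START (n + n) := by
  refine ⟨fun hc => ?_, ?_⟩
  · have hle : ∀ {u w : Fin (n + n) → Bool},
        (∀ h' m, u ((half n).symm (h', m)) ≤ w ((half n).symm (h', m))) → u ≤ w :=
      fun hle i => by simpa using hle ((half n) i).1 ((half n) i).2
    cases h <;> cases c
    · exact hv.eq_of_le inA_ACTIVE (hle fun h' m => by cases h' <;> simp [hc, ACTIVE_half_symm])
    · refine (inA_START.eq_of_le hv (hle fun h' m => ?_)).symm
      cases h' <;> simp [hc, START_half_symm]
    · exact hv.eq_of_le inA_START (hle fun h' m => by cases h' <;> simp [hc, START_half_symm])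
    · refine (inA_ACTIVE.eq_of_le hv (hle fun h' m => ?_)).symm
      cases h' <;> simp [hc, ACTIVE_half_symm]
  · rintro rfl m
    cases h <;> cases c <;> simp [START_half_symm, ACTIVE_half_symm]

inductive Cell where
  | ok | okPrev | okBoth | start1 | start2 | start3 | startRecent | feedback | state | out
  deriving DecidableEq

instance : Fintype Cell where
  elems := {.ok, .okPrev, .okBoth, .start1, .start2, .start3, .startRecent, .feedback, .state, .out}
  complete c := by cases c <;> simp

/-- `node h isAnd l k` is the node at level `l` and position `k` of the `∧`- (or `∨`-) tree over
the half `h` of the inputs; it covers the inputs `m` of that half with `m / 2 ^ l = k`. -/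
inductive Vtx (n : ℕ) where
  | inp (i : Fin (n + n))
  | node (h isAnd : Bool) (l : Fin (n + 1)) (k : Fin n)
  | latch (pol : Bool) (c : Cell)
  deriving DecidableEq, Fintype

open Vtx Cell Gate

def child (h isAnd : Bool) (l : Fin (n + 1)) (j : ℕ) : Option (Vtx n) :=
  if hj : j < n then some (node h isAnd l ⟨j, hj⟩) else none

def root [NeZero n] (h isAnd : Bool) : Vtx n := node h isAnd (Fin.last n) 0

/-- For `pol = true` this is the De Morgan dual of the latch for `pol = false`, fed by the dual
trees. -/
def latchGate [NeZero n] (pol : Bool) : Cell → Gate (Vtx n)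
  | ok => op pol (root true !pol) (root false !pol)
  | okPrev => copy (latch pol ok)
  | okBoth => op (!pol) (latch pol ok) (latch pol okPrev)
  | start1 => copy (root pol !pol)
  | start2 => copy (latch pol start1)
  | start3 => copy (latch pol start2)
  | startRecent => op pol (latch pol start1) (latch pol start2)
  | feedback => op pol (latch pol state) (latch pol startRecent)
  | state => op (!pol) (latch pol feedback) (latch pol okBoth)
  | out => op pol (latch pol state) (latch pol start3)

def gate [NeZero n] : Vtx n → Gate (Vtx n)
  | inp _ => const false
  | node h _ ⟨0, _⟩ k => copy (inp ((half n).symm (h, k)))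
  | node h isAnd ⟨l + 1, hl⟩ k =>
      opOption isAnd (child h isAnd ⟨l, by omega⟩ (2 * k.val))
        (child h isAnd ⟨l, by omega⟩ (2 * k.val + 1))
  | latch pol c => latchGate pol c

def latchConsumers : Cell → Finset Cell
  | ok => {okPrev, okBoth}
  | okPrev => {okBoth}
  | okBoth => {state}
  | start1 => {start2, startRecent}
  | start2 => {start3, startRecent}
  | start3 => {out}
  | startRecent => {feedback}
  | feedback => {state}
  | state => {feedback, out}
  | out => ∅

def consumers : Vtx n → Finset (Vtx n)
  | inp i => {node (half n i).1 true 0 (half n i).2, node (half n i).1 false 0 (half n i).2}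
  | node h isAnd l k =>
      if hl : (l : ℕ) < n then {node h isAnd ⟨l + 1, by omega⟩ ⟨k.val / 2, by omega⟩}
      else {latch (!isAnd) ok, latch (!isAnd) start1}
  | latch pol c => (latchConsumers c).image (latch pol)

lemma card_consumers_le (v : Vtx n) : (consumers v).card ≤ 2 := by
  cases v with
  | inp i => exact Finset.card_le_two
  | node h isAnd l k =>
    dsimp only [consumers]
    split_ifs
    · simp
    · exact Finset.card_le_two
  | latch pol c =>
    refine Finset.card_image_le.trans ?_
    cases c <;> decide

lemma mem_consumers_of_mem_reads [NeZero n] {a v : Vtx n} (ha : a ∈ (gate v).reads) :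
    v ∈ consumers a := by
  match v with
  | inp _ => simp [gate, reads] at ha
  | node _ isAnd ⟨0, _⟩ _ =>
    obtain rfl : a = _ := by simpa [gate, reads] using ha
    cases isAnd <;> simp [consumers]
  | node h isAnd ⟨l + 1, hl⟩ k =>
    obtain ⟨j, hj, hja⟩ : ∃ j, (j = 2 * k.val ∨ j = 2 * k.val + 1) ∧
        child h isAnd ⟨l, by omega⟩ j = some a := by
      rcases mem_reads_opOption ha with h' | h' <;> exact ⟨_, by simp, h'⟩
    simp only [child] at hja
    split_ifs at hja with hjn
    cases hja
    simp only [consumers, show l < n by omega, dite_true, Finset.mem_singleton, node.injEq,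
      true_and]
    exact Fin.ext (by simp; omega)
  | latch pol c =>
    cases c <;>
      simp only [gate, latchGate, reads, Finset.mem_insert, Finset.mem_singleton] at ha <;>
      rcases ha with rfl | rfl <;> simp [consumers, latchConsumers, root]

def IsTrajectory [NeZero n] (y : ℕ → Vtx n → Bool) : Prop :=
  ∀ t v, (∀ i, v ≠ inp i) → y (t + 1) v = (gate v).eval (y t)

def input (y : ℕ → Vtx n → Bool) (t : ℕ) : Fin (n + n) → Bool := fun i => y t (inp i)

def leavesUnder (l j : ℕ) : Finset (Fin n) :=
  Finset.univ.filter fun m => m.val / 2 ^ l = j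

lemma leavesUnder_zero (k : Fin n) : leavesUnder 0 k = {k} := by
  ext m; simp [leavesUnder, Fin.ext_iff]

lemma leavesUnder_succ (l j : ℕ) :
    leavesUnder (l + 1) j =
      (leavesUnder l (2 * j) ∪ leavesUnder l (2 * j + 1) : Finset (Fin n)) := by
  ext m
  simp only [leavesUnder, Finset.mem_filter, Finset.mem_univ, true_and, Finset.mem_union,
    pow_succ, ← Nat.div_div_eq_div_mul]
  omega

lemma leavesUnder_eq_empty {l j : ℕ} (hj : n ≤ j) :
    leavesUnder l j = (∅ : Finset (Fin n)) := by
  ext m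
  simp only [leavesUnder, Finset.mem_filter, Finset.mem_univ, true_and, Finset.notMem_empty,
    iff_false]
  have := Nat.div_le_self m.val (2 ^ l)
  omega

lemma leavesUnder_self_zero : leavesUnder n 0 = (Finset.univ : Finset (Fin n)) := by
  ext m
  simp only [leavesUnder, Finset.mem_filter, Finset.mem_univ, true_and, iff_true]
  exact Nat.div_eq_of_lt (m.isLt.trans (Nat.lt_two_pow_self))

variable [NeZero n] {y : ℕ → Vtx n → Bool}

lemma IsTrajectory.node_succ (hy : IsTrajectory y) (t : ℕ) (h isAnd : Bool) (l : Fin (n + 1))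
    (k : Fin n) : y (t + 1) (node h isAnd l k) = (gate (node h isAnd l k)).eval (y t) :=
  hy t _ fun _ => nofun

lemma IsTrajectory.latch_succ (hy : IsTrajectory y) (t : ℕ) (pol : Bool) (c : Cell) :
    y (t + 1) (latch pol c) = (latchGate pol c).eval (y t) :=
  hy t _ fun _ => nofun

lemma IsTrajectory.node_eq (hy : IsTrajectory y) (t : ℕ) (h isAnd : Bool) (l : Fin (n + 1))
    (k : Fin n) :
    y (t + l + 1) (node h isAnd l k) =
      bigAndOr isAnd (leavesUnder l k) fun m => input y t ((half n).symm (h, m)) := by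
  obtain ⟨l, hl⟩ := l
  induction l generalizing k with
  | zero =>
    simp only [add_zero, hy.node_succ, gate, eval, leavesUnder_zero, bigAndOr_singleton, input]
  | succ l ih =>
    have hchild : ∀ j, ((child h isAnd ⟨l, by omega⟩ j).map (y (t + l + 1))).getD isAnd =
        bigAndOr isAnd (leavesUnder l j) fun m => input y t ((half n).symm (h, m)) := by
      intro j
      unfold child
      split_ifs with hj
      · exact ih ⟨j, hj⟩ (by omega)
      · simp [leavesUnder_eq_empty (not_lt.mp hj)]
    rw [show t + (l + 1) + 1 = t + l + 1 + 1 by ring, hy.node_succ]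
    simp only [gate, eval_opOption, hchild, leavesUnder_succ, bigAndOr_union]

lemma IsTrajectory.root_xor (hy : IsTrajectory y) (t : ℕ) (h pol : Bool) :
    (y (n + (t + 1)) (root h !pol) ^^ pol) =
      decide (∀ m, input y t ((half n).symm (h, m)) = !pol) := by
  have := hy.node_eq t h (!pol) (Fin.last n) 0
  simp only [Fin.val_last, Fin.val_zero, leavesUnder_self_zero] at this
  simp [root, show n + (t + 1) = t + n + 1 by ring, this, bigAndOr_xor_self]

def startSignal (y : ℕ → Vtx n → Bool) (pol : Bool) (t : ℕ) : Bool :=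
  y t (root pol !pol) ^^ pol

def okSignal (y : ℕ → Vtx n → Bool) (pol : Bool) (t : ℕ) : Bool :=
  (y t (root true !pol) ^^ pol) || (y t (root false !pol) ^^ pol)

/-- Read through `· ^^ pol`, every gate `op pol` of the latch becomes an `∨` and every
`op !pol` an `∧`. -/
lemma IsTrajectory.latch_xor_succ (hy : IsTrajectory y) (t : ℕ) (pol : Bool) (c : Cell) :
    (y (t + 1) (latch pol c) ^^ pol) = ((latchGate pol c).eval (y t) ^^ pol) := by
  rw [hy.latch_succ]

lemma IsTrajectory.okBoth_xor (hy : IsTrajectory y) (pol : Bool) (t : ℕ) :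
    (y (t + 3) (latch pol okBoth) ^^ pol) = (okSignal y pol (t + 1) && okSignal y pol t) := by
  simp only [hy.latch_xor_succ, latchGate, eval, andOr_xor, Bool.xor_self, Bool.not_xor_self,
    andOr_true, andOr_false, okSignal]

lemma IsTrajectory.startRecent_xor (hy : IsTrajectory y) (pol : Bool) (t : ℕ) :
    (y (t + 3) (latch pol startRecent) ^^ pol) =
      (startSignal y pol (t + 1) || startSignal y pol t) := by
  simp only [hy.latch_xor_succ, latchGate, eval, andOr_xor, Bool.xor_self, andOr_false,
    startSignal]

lemma IsTrajectory.state_xor (hy : IsTrajectory y) (pol : Bool) (t : ℕ) :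
    (y (t + 5) (latch pol state) ^^ pol) =
      (((y (t + 3) (latch pol state) ^^ pol) || startSignal y pol (t + 1) || startSignal y pol t) &&
        okSignal y pol (t + 2) && okSignal y pol (t + 1)) := by
  rw [hy.latch_xor_succ (t + 4)]
  simp only [latchGate, eval, andOr_xor, Bool.not_xor_self, andOr_true]
  rw [hy.latch_xor_succ (t + 3)]
  simp only [latchGate, eval, andOr_xor, Bool.xor_self, andOr_false]
  rw [hy.startRecent_xor, hy.okBoth_xor (t := t + 1)]
  simp only [Bool.or_assoc, Bool.and_assoc]

lemma IsTrajectory.out_xor (hy : IsTrajectory y) (pol : Bool) (t : ℕ) :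
    (y (t + 4) (latch pol out) ^^ pol) =
      ((y (t + 3) (latch pol state) ^^ pol) || startSignal y pol t) := by
  rw [hy.latch_xor_succ (t + 3)]
  simp only [latchGate, eval, andOr_xor, Bool.xor_self, andOr_false, startSignal,
    hy.latch_xor_succ _ _ start3, hy.latch_xor_succ _ _ start2, hy.latch_xor_succ _ _ start1]

lemma IsTrajectory.startSignal_eq (hy : IsTrajectory y) (pol : Bool) {t : ℕ}
    (hv : inA (input y t)) :
    startSignal y pol (n + (t + 1)) = decide (input y t = START (n + n)) := by
  simp [startSignal, hy.root_xor, forall_half_eq_iff hv]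

lemma IsTrajectory.okSignal_eq (hy : IsTrajectory y) (pol : Bool) {t : ℕ}
    (hv : inA (input y t)) :
    okSignal y pol (n + (t + 1)) =
      (decide (input y t = START (n + n)) || decide (input y t = ACTIVE (n + n))) := by
  simp only [okSignal, hy.root_xor, forall_half_eq_iff hv]
  cases pol <;> simp [Bool.or_comm]

theorem IsTrajectory.out_eq (hy : IsTrajectory y) {M j : ℕ} (hjM : j ≤ M)
    (hA : ∀ s ≤ M, inA (input y s)) (h0 : input y 0 = START (n + n))
    (hstart : ∀ s, 0 < s → s ≤ M → input y s ≠ START (n + n))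
    (hact : ∀ s, 1 ≤ s → s ≤ j → input y s = ACTIVE (n + n))
    (hj : j < M → input y (j + 1) ≠ ACTIVE (n + n)) (pol : Bool) {s : ℕ} (hs : n + 5 ≤ s)
    (hsM : s ≤ n + 5 + M) :
    y s (latch pol out) = (decide (s ≤ n + 5 + j) ^^ pol) := by
  have hlatch := latch_spec (w := fun k => y (n + k + 3) (latch pol state) ^^ pol)
    (s := fun k => startSignal y pol (n + k)) (h := fun k => okSignal y pol (n + k)) hjM
    (fun k => hy.state_xor pol (n + k))
    (by simp [hy.startSignal_eq pol (hA 0 (Nat.zero_le M)), h0])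
    (fun k hk hkM => by
      obtain ⟨m, rfl⟩ : ∃ m, k = m + 1 := ⟨k - 1, by omega⟩
      simp [hy.startSignal_eq pol (hA m (by omega)), hstart m (by omega) (by omega)])
    (fun k hk hkj => by
      obtain ⟨m, rfl⟩ : ∃ m, k = m + 1 := ⟨k - 1, by omega⟩
      rcases Nat.eq_zero_or_pos m with rfl | hm
      · simp [hy.okSignal_eq pol (hA 0 (Nat.zero_le M)), h0]
      · simp [hy.okSignal_eq pol (hA m (by omega)), hact m hm (by omega)])
    (fun hjM' => by
      simp [hy.okSignal_eq pol (hA (j + 1) hjM'), hj hjM', hstart (j + 1) (by omega) hjM'])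
  obtain ⟨k, rfl⟩ : ∃ k, s = n + k + 4 := ⟨s - (n + 4), by omega⟩
  rw [show decide (n + k + 4 ≤ n + 5 + j) = decide (k ≤ j + 1) from decide_eq_decide.mpr (by omega),
    ← hlatch k (by omega) (by omega), ← hy.out_xor, Bool.xor_assoc, Bool.xor_self, Bool.xor_false]

lemma isTrajectory_of_circuitMap {K : ℕ} {e : Vtx n ≃ Fin K} {x : ℕ → Fin K → Bool}
    (hx : ∀ t j, (∀ i, j ≠ e (inp i)) → x (t + 1) j = circuitMap gate e (x t) j) :
    IsTrajectory fun t v => x t (e v) := fun t v hv =>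
  (hx t (e v) fun i h => hv i (e.injective h)).trans (circuitMap_apply gate e (x t) v)

end SwitchNetwork

open SwitchNetwork Vtx Cell

/-- Lemma 4 (the switch `D`): there is a monotone Boolean network with inputs
`p_1, …, p_L`, outputs `q_1, q_2`, in- and outdegrees at most `2` (inputs of
indegree `0`, outputs of outdegree `0`), and a delay `μ > 0`, such that for any
input sequence taking values in `A`, starting with `START` at time `0` and
never returning to `START` up to time `M > 1`, if `j ≤ M` is largest such that
the input equals `ACTIVE` at all times `1, …, j`, then the output is `(1,0)`
for `μ ≤ s ≤ μ + j` and `(0,1)` for `μ + j < s ≤ μ + M`, regardless of the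
initial values of the non-input coordinates. -/
theorem stmt6 (L : ℕ) (hL : 0 < L) (hLeven : Even L) :
    ∃ (K μ : ℕ) (F : (Fin K → Bool) → (Fin K → Bool))
      (p : Fin L → Fin K) (q : Fin 2 → Fin K),
      0 < μ ∧ Monotone F ∧
      Function.Injective p ∧ Function.Injective q ∧ (∀ i j, p i ≠ q j) ∧
      (∀ j : Fin K, {i : Fin K | BNarc F i j}.ncard ≤ 2) ∧
      (∀ i : Fin K, {j : Fin K | BNarc F i j}.ncard ≤ 2) ∧
      (∀ i, ∀ k, ¬ BNarc F k (p i)) ∧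
      (∀ i, ∀ k, ¬ BNarc F (q i) k) ∧
      (∀ M : ℕ, 1 < M →
        ∀ x : ℕ → Fin K → Bool,
        (∀ (t : ℕ) (j : Fin K), (∀ i, j ≠ p i) → x (t + 1) j = F (x t) j) →
        (∀ s : ℕ, s ≤ M → inA (fun i => x s (p i))) →
        ((fun i => x 0 (p i)) = START L) →
        (∀ s : ℕ, 0 < s → s ≤ M → (fun i => x s (p i)) ≠ START L) →
        ∀ j : ℕ, j ≤ M →
          (∀ s : ℕ, 1 ≤ s → s ≤ j → (fun i => x s (p i)) = ACTIVE L) →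
          (j < M → (fun i => x (j + 1) (p i)) ≠ ACTIVE L) →
          (∀ s : ℕ, μ ≤ s → s ≤ μ + j →
            x s (q 0) = true ∧ x s (q 1) = false) ∧
          (∀ s : ℕ, μ + j < s → s ≤ μ + M →
            x s (q 0) = false ∧ x s (q 1) = true)) := by
  obtain ⟨n, rfl⟩ := hLeven
  have : NeZero n := ⟨by omega⟩
  let e := Fintype.equivFin (Vtx n)
  refine ⟨_, n + 5, circuitMap gate e, fun i => e (inp i),
    ![e (latch false out), e (latch true out)], by omega, circuitMap_monotone gate e,
    fun i j h => by simpa using e.injective h, ?_,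
    fun i j => by fin_cases j <;> simp, ncard_BNarc_in_le,
    fun i => (ncard_BNarc_out_le consumers (fun _ _ => mem_consumers_of_mem_reads) i).trans
      (card_consumers_le _),
    fun i k hk => by simpa [gate, Gate.reads] using mem_reads_of_BNarc hk,
    fun i k hk => ?_, ?_⟩
  · intro i j h
    fin_cases i <;> fin_cases j <;> simp_all
  · have := mem_consumers_of_mem_reads (mem_reads_of_BNarc hk)
    fin_cases i <;> simp_all [consumers, latchConsumers]
  · intro M _ x hx hA h0 hstart j hjM hact hj
    have hout := (isTrajectory_of_circuitMap hx).out_eq hjM hA h0 hstart hact hj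
    refine ⟨fun s hs hsj => ?_, fun s hjs hsM => ?_⟩
    · exact ⟨by simpa [hsj] using hout false hs (by omega),
        by simpa [hsj] using hout true hs (by omega)⟩
    · have hsj : ¬ s ≤ n + 5 + j := by omega
      exact ⟨by simpa [hsj] using hout false (by omega) hsM,
        by simpa [hsj] using hout true (by omega) hsM⟩
end

section
/- Let u, v : ℕ → {0,1} be given driving sequences and let c, d : ℕ → {0,1} satisfy c(t) = u(t−1) ∨ d(t−1) and d(t) = v(t−1) ∧ c(t−1) for all t ≥ 1. Suppose for some time t_0 ≥ 0, integers M > 1 and 0 < j < M: u(t_0) = u(t_0+1) = 1 and u(s) = 0 for t_0+1 < s ≤ t_0+M; v(t_0) = 0, v(s) = 1 for t_0+1 ≤ s ≤ t_0+j, and v(t_0+j+1) = v(t_0+j+2) = 0. Then, regardless of the values of c and d at times ≤ t_0: c(t_0+1) = 1 and d(t_0+1) = 0; c(s) = d(s) = 1 for t_0+1 < s ≤ t_0+1+j; c(t_0+j+2) = 1 and d(t_0+j+2) = 0; and c(s) = d(s) = 0 for t_0+j+3 ≤ s ≤ t_0+M+1. -/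
/-! The switch has two absorbing regimes. If `c` and `u` are on at time `t`, then `(c, d)` is
`(1, 1)` from `t + 1` on for as long as `v` stays on, because `c` is fed by `d` and `d` by `c`.
If `d` and `v` are off at time `t`, then `(c, d)` is `(0, 0)` from `t + 1` on for as long as
`u` stays off. The pulses of `u` and `v` in the statement switch between these regimes. -/

theorem switch_on_of_set {u v c d : ℕ → Bool}
    (hc : ∀ t : ℕ, c (t + 1) = (u t || d t)) (hd : ∀ t : ℕ, d (t + 1) = (v t && c t))
    {t t' : ℕ} (hct : c t = true) (hut : u t = true)
    (hv : ∀ s : ℕ, t ≤ s → s < t' → v s = true) :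
    ∀ s : ℕ, t < s → s ≤ t' → c s = true ∧ d s = true := by
  refine Nat.le_induction ?_ (fun s hts ih hs ↦ ?_)
  · intro ht
    simp [hc, hd, hut, hct, hv t le_rfl ht]
  · obtain ⟨hcs, hds⟩ := ih (by omega)
    simp [hc, hd, hcs, hds, hv s (by omega) (by omega)]

theorem switch_off_of_reset {u v c d : ℕ → Bool}
    (hc : ∀ t : ℕ, c (t + 1) = (u t || d t)) (hd : ∀ t : ℕ, d (t + 1) = (v t && c t))
    {t t' : ℕ} (hdt : d t = false) (hvt : v t = false)
    (hu : ∀ s : ℕ, t ≤ s → s < t' → u s = false) :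
    ∀ s : ℕ, t < s → s ≤ t' → c s = false ∧ d s = false := by
  refine Nat.le_induction ?_ (fun s hts ih hs ↦ ?_)
  · intro ht
    simp [hc, hd, hdt, hvt, hu t le_rfl ht]
  · obtain ⟨hcs, hds⟩ := ih (by omega)
    simp [hc, hd, hcs, hds, hu s (by omega) (by omega)]

theorem stmt7_general (u v c d : ℕ → Bool)
    (hc : ∀ t : ℕ, c (t + 1) = (u t || d t))
    (hd : ∀ t : ℕ, d (t + 1) = (v t && c t))
    (t₀ M j : ℕ) (hj0 : 0 < j)
    (hu0 : u t₀ = true) (hu1 : u (t₀ + 1) = true)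
    (hu : ∀ s : ℕ, t₀ + 1 < s → s ≤ t₀ + M → u s = false)
    (hv0 : v t₀ = false)
    (hv1 : ∀ s : ℕ, t₀ + 1 ≤ s → s ≤ t₀ + j → v s = true)
    (hv2 : v (t₀ + j + 1) = false) (hv3 : v (t₀ + j + 2) = false) :
    c (t₀ + 1) = true ∧ d (t₀ + 1) = false ∧
    (∀ s : ℕ, t₀ + 1 < s → s ≤ t₀ + 1 + j → c s = true ∧ d s = true) ∧
    c (t₀ + j + 2) = true ∧ d (t₀ + j + 2) = false ∧
    (∀ s : ℕ, t₀ + j + 3 ≤ s → s ≤ t₀ + M + 1 → c s = false ∧ d s = false) := by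
  have hc1 : c (t₀ + 1) = true := by simp [hc, hu0]
  have hon : ∀ s : ℕ, t₀ + 1 < s → s ≤ t₀ + 1 + j → c s = true ∧ d s = true :=
    switch_on_of_set hc hd hc1 hu1 fun s hs hs' ↦ hv1 s hs (by omega)
  have hdj : d (t₀ + j + 1) = true := (hon (t₀ + j + 1) (by omega) (by omega)).2
  have hdj2 : d (t₀ + j + 2) = false := by simp [hd, hv2]
  have hoff := switch_off_of_reset (t' := t₀ + M + 1) hc hd hdj2 hv3
    fun s hs hs' ↦ hu s (by omega) (by omega)
  exact ⟨hc1, by simp [hd, hv0], hon, by simp [hc, hdj], hdj2,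
    fun s hs hs' ↦ hoff s (by omega) hs'⟩

/-- The core switch: with `c(t) = u(t-1) ∨ d(t-1)` and `d(t) = v(t-1) ∧ c(t-1)`,
if `u` is on exactly at times `t₀, t₀+1` (within the window) and `v` is on
exactly at times `t₀+1, …, t₀+j` (with `v` off at `t₀`, `t₀+j+1`, `t₀+j+2`,
where `0 < j < M`), then, regardless of the values of `c` and `d` at times
`≤ t₀`: `c(t₀+1) = 1`, `d(t₀+1) = 0`; `c(s) = d(s) = 1` for
`t₀+1 < s ≤ t₀+1+j`; `c(t₀+j+2) = 1`, `d(t₀+j+2) = 0`; and `c(s) = d(s) = 0`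
for `t₀+j+3 ≤ s ≤ t₀+M+1`. -/
theorem stmt7 (u v c d : ℕ → Bool)
    (hc : ∀ t : ℕ, c (t + 1) = (u t || d t))
    (hd : ∀ t : ℕ, d (t + 1) = (v t && c t))
    (t₀ M j : ℕ) (hM : 1 < M) (hj0 : 0 < j) (hjM : j < M)
    (hu0 : u t₀ = true) (hu1 : u (t₀ + 1) = true)
    (hu : ∀ s : ℕ, t₀ + 1 < s → s ≤ t₀ + M → u s = false)
    (hv0 : v t₀ = false)
    (hv1 : ∀ s : ℕ, t₀ + 1 ≤ s → s ≤ t₀ + j → v s = true)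
    (hv2 : v (t₀ + j + 1) = false) (hv3 : v (t₀ + j + 2) = false) :
    c (t₀ + 1) = true ∧ d (t₀ + 1) = false ∧
    (∀ s : ℕ, t₀ + 1 < s → s ≤ t₀ + 1 + j → c s = true ∧ d s = true) ∧
    c (t₀ + j + 2) = true ∧ d (t₀ + j + 2) = false ∧
    (∀ s : ℕ, t₀ + j + 3 ≤ s → s ≤ t₀ + M + 1 → c s = false ∧ d s = false) :=
  stmt7_general u v c d hc hd t₀ M j hj0 hu0 hu1 hu hv0 hv1 hv2 hv3
end
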